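/- Let X be a real normed vector space, K ⊂ X a non-zero wedge, and 𝒜 a nonempty set of homogeneous, bounded maps on K. Then the generalized spectral subradius equals the joint spectral subradius: inf_{m∈ℕ} (inf_{f∈𝒜^m} r(f))^{1/m} = inf_{m∈ℕ} (inf_{f∈𝒜^m} ‖f‖)^{1/m}. -/

import Mathlib

open Filter Topology Set

noncomputable section

/-- A wedge in a real normed space: a convex set closed under positive scalar multiplication. -/
def IsWedge {X : Type*} [NormedAddCommGroup X] [NormedSpace ℝ X] (W : Set X) : Prop :=
  Convex ℝ W ∧ ∀ c : ℝ, 0 < c → ∀ x ∈ W, c • x ∈ W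

/-- A closed cone: closed, convex, closed under positive scalar multiplication, K ∩ (−K) = {0}. -/
def IsClosedCone {X : Type*} [NormedAddCommGroup X] [NormedSpace ℝ X] (K : Set X) : Prop :=
  IsClosed K ∧ Convex ℝ K ∧ (∀ c : ℝ, 0 < c → ∀ x ∈ K, c • x ∈ K) ∧ K ∩ (-K) = {0}

/-- A polyhedral cone: intersection of finitely many closed halfspaces through the origin. -/
def IsPolyhedralCone {X : Type*} [NormedAddCommGroup X] [NormedSpace ℝ X] (K : Set X) : Prop :=
  ∃ (k : ℕ) (φ : Fin k → (X →ₗ[ℝ] ℝ)), K = {x | ∀ i, 0 ≤ φ i x}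

/-- `f` maps `W` into itself and is positively homogeneous on `W`. -/
def HomogOn {X : Type*} [NormedAddCommGroup X] [NormedSpace ℝ X] (f : X → X) (W : Set X) : Prop :=
  Set.MapsTo f W W ∧ ∀ c : ℝ, 0 < c → ∀ x ∈ W, f (c • x) = c • f x

/-- `f` is order-preserving with respect to the order induced by the cone `K`. -/
def OrderPresOn {X : Type*} [NormedAddCommGroup X] [NormedSpace ℝ X] (f : X → X) (K : Set X) : Prop :=
  ∀ x ∈ K, ∀ y ∈ K, y - x ∈ K → f y - f x ∈ K

/-- `f` is subadditive on `K`: f(x+y) ≤ f(x)+f(y) in the cone order. -/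
def SubaddOn {X : Type*} [NormedAddCommGroup X] [NormedSpace ℝ X] (f : X → X) (K : Set X) : Prop :=
  ∀ x ∈ K, ∀ y ∈ K, (f x + f y) - f (x + y) ∈ K

/-- The norm of a homogeneous map on `W`: sup of ‖f x‖ over unit vectors of `W`. -/
def opNormW {X : Type*} [NormedAddCommGroup X] (f : X → X) (W : Set X) : ℝ :=
  sSup ((fun x => ‖f x‖) '' {x ∈ W | ‖x‖ = 1})

/-- A bounded homogeneous map on `W`. -/
def BoundedMapOn {X : Type*} [NormedAddCommGroup X] (f : X → X) (W : Set X) : Prop :=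
  ∃ C : ℝ, ∀ x ∈ W, ‖f x‖ ≤ C * ‖x‖

/-- A bounded family of homogeneous maps on `W`. -/
def BoundedFamOn {X : Type*} [NormedAddCommGroup X] (A : Set (X → X)) (W : Set X) : Prop :=
  ∃ C : ℝ, ∀ f ∈ A, ∀ x ∈ W, ‖f x‖ ≤ C * ‖x‖

/-- `famPow A m` = 𝒜^m, the set of m-fold compositions of maps from `A` (with 𝒜^0 = {id}). -/
def famPow {X : Type*} (A : Set (X → X)) : ℕ → Set (X → X)
  | 0 => {id}
  | m + 1 => {h | ∃ f ∈ A, ∃ g ∈ famPow A m, h = f ∘ g}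

/-- The composition of two families of maps. -/
def compFam {X : Type*} (A B : Set (X → X)) : Set (X → X) :=
  {h | ∃ f ∈ A, ∃ g ∈ B, h = f ∘ g}

/-- The Bonsall cone spectral radius r(f) = inf_{n>0} ‖f^n‖^{1/n}. -/
def coneSpecRad {X : Type*} [NormedAddCommGroup X] (f : X → X) (W : Set X) : ℝ :=
  ⨅ n : ℕ+, (opNormW (f^[(n : ℕ)]) W) ^ (((n : ℕ) : ℝ)⁻¹)

/-- sup_{f ∈ 𝒜^m} ‖f‖^{1/m}. -/
def jointTerm {X : Type*} [NormedAddCommGroup X] (A : Set (X → X)) (W : Set X) (m : ℕ) : ℝ :=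
  sSup ((fun f => (opNormW f W) ^ ((m : ℝ)⁻¹)) '' famPow A m)

/-- sup_{f ∈ 𝒜^m} r(f)^{1/m}. -/
def genTerm {X : Type*} [NormedAddCommGroup X] (A : Set (X → X)) (W : Set X) (m : ℕ) : ℝ :=
  sSup ((fun f => (coneSpecRad f W) ^ ((m : ℝ)⁻¹)) '' famPow A m)

/-- The joint spectral radius r̂(𝒜) = inf_{m>0} sup_{f ∈ 𝒜^m} ‖f‖^{1/m}. -/
def jointRad {X : Type*} [NormedAddCommGroup X] (A : Set (X → X)) (W : Set X) : ℝ :=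
  ⨅ m : ℕ+, jointTerm A W (m : ℕ)

/-- The generalized spectral radius r(𝒜) = sup_{m>0} sup_{f ∈ 𝒜^m} r(f)^{1/m}. -/
def genRad {X : Type*} [NormedAddCommGroup X] (A : Set (X → X)) (W : Set X) : ℝ :=
  ⨆ m : ℕ+, genTerm A W (m : ℕ)

/-- β_m = inf_{f ∈ 𝒜^m} ‖f‖. -/
def subBeta {X : Type*} [NormedAddCommGroup X] (A : Set (X → X)) (W : Set X) (m : ℕ) : ℝ :=
  sInf ((fun f => opNormW f W) '' famPow A m)

/-- γ_m = inf_{f ∈ 𝒜^m} r(f). -/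
def subGamma {X : Type*} [NormedAddCommGroup X] (A : Set (X → X)) (W : Set X) (m : ℕ) : ℝ :=
  sInf ((fun f => coneSpecRad f W) '' famPow A m)

/-- F_m^d = f_m ∘ ⋯ ∘ f_1 for a sequence d of maps. -/
def seqComp {X : Type*} (d : ℕ → X → X) : ℕ → X → X
  | 0 => id
  | m + 1 => d m ∘ seqComp d m

/-- The standard cone ℝⁿ_{≥0}. -/
def stdCone (n : ℕ) : Set (Fin n → ℝ) := {x | ∀ i, 0 ≤ x i}

/-- The closed face F_J of the standard cone. -/
def stdFace {n : ℕ} (J : Set (Fin n)) : Set (Fin n → ℝ) :=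
  {x | (∀ i, 0 ≤ x i) ∧ ∀ i ∉ J, x i = 0}

/-- A family of maps on ℝⁿ_{≥0} is irreducible if no non-trivial closed face is invariant
under every member of the family. -/
def IrreducibleFam {n : ℕ} (A : Set ((Fin n → ℝ) → Fin n → ℝ)) : Prop :=
  ¬ ∃ J : Set (Fin n), J.Nonempty ∧ J ≠ Set.univ ∧ ∀ f ∈ A, Set.MapsTo f (stdFace J) (stdFace J)

/-!
Since `r(f) ≤ ‖f‖`, we have `γ_m ≤ β_m` for every `m`, which gives one inequality.
Conversely let `R = inf_m β_m^{1/m}`. For `f ∈ 𝒜^m` and `n ≥ 1` the iterate `f^n` lies in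
`𝒜^{mn}`, so `R^{mn} ≤ β_{mn} ≤ ‖f^n‖`. Taking `n`-th roots and the infimum over `n` gives
`R^m ≤ r(f)` (no limit is needed, as `r(f) = inf_n ‖f^n‖^{1/n}`), hence `R^m ≤ γ_m`,
i.e. `R ≤ γ_m^{1/m}`.
-/

lemma Real.le_rpow_natCast_inv_iff {x y : ℝ} {n : ℕ} (hx : 0 ≤ x) (hy : 0 ≤ y) (hn : n ≠ 0) :
    x ≤ y ^ ((n : ℝ)⁻¹) ↔ x ^ n ≤ y := by
  rw [Real.le_rpow_inv_iff_of_pos hx hy (by positivity), Real.rpow_natCast]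

section RootInfimum

variable {b : ℕ → ℝ}

lemma bddBelow_range_rpow_inv (hb : ∀ m, 0 ≤ b m) :
    BddBelow (range fun m : ℕ+ => b m ^ (((m : ℕ) : ℝ)⁻¹)) :=
  ⟨0, by rintro _ ⟨m, rfl⟩; exact Real.rpow_nonneg (hb m) _⟩

lemma iInf_rpow_inv_nonneg (hb : ∀ m, 0 ≤ b m) :
    0 ≤ ⨅ m : ℕ+, b m ^ (((m : ℕ) : ℝ)⁻¹) :=
  le_ciInf fun m => Real.rpow_nonneg (hb m) _

lemma iInf_rpow_inv_pow_le (hb : ∀ m, 0 ≤ b m) (k : ℕ+) :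
    (⨅ m : ℕ+, b m ^ (((m : ℕ) : ℝ)⁻¹)) ^ (k : ℕ) ≤ b k :=
  (Real.le_rpow_natCast_inv_iff (iInf_rpow_inv_nonneg hb) (hb k) k.ne_zero).1
    (ciInf_le (bddBelow_range_rpow_inv hb) k)

end RootInfimum

section FamPow

variable {X : Type*} {A : Set (X → X)}

lemma famPow_nonempty (hA : A.Nonempty) (m : ℕ) : (famPow A m).Nonempty := by
  induction m with
  | zero => exact ⟨id, rfl⟩
  | succ m ih =>
    obtain ⟨f, hf⟩ := hA
    obtain ⟨g, hg⟩ := ih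
    exact ⟨f ∘ g, f, hf, g, hg, rfl⟩

lemma comp_mem_famPow {p q : ℕ} {f g : X → X} (hf : f ∈ famPow A p) (hg : g ∈ famPow A q) :
    f ∘ g ∈ famPow A (p + q) := by
  induction p generalizing f with
  | zero =>
    obtain rfl : f = id := hf
    simpa using hg
  | succ p ih =>
    obtain ⟨a, ha, f', hf', rfl⟩ := hf
    rw [Nat.succ_add]
    exact ⟨a, ha, f' ∘ g, ih hf', rfl⟩

lemma iterate_mem_famPow {m : ℕ} {f : X → X} (hf : f ∈ famPow A m) (n : ℕ) :
    f^[n] ∈ famPow A (m * n) := by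
  induction n with
  | zero => rfl
  | succ n ih =>
    rw [Function.iterate_succ', Nat.mul_succ, Nat.add_comm]
    exact comp_mem_famPow hf ih

end FamPow

section Subradius

variable {X : Type*} [NormedAddCommGroup X]

lemma opNormW_nonneg (f : X → X) (W : Set X) : 0 ≤ opNormW f W :=
  Real.sSup_nonneg (by rintro _ ⟨x, -, rfl⟩; exact norm_nonneg _)

lemma coneSpecRad_nonneg (f : X → X) (W : Set X) : 0 ≤ coneSpecRad f W :=
  le_ciInf fun _ => Real.rpow_nonneg (opNormW_nonneg _ _) _

lemma coneSpecRad_le_opNormW (f : X → X) (W : Set X) : coneSpecRad f W ≤ opNormW f W := by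
  simpa [coneSpecRad] using
    ciInf_le (bddBelow_range_rpow_inv fun n => opNormW_nonneg (f^[n]) W) 1

lemma le_coneSpecRad {W : Set X} {f : X → X} {c : ℝ} (hc : 0 ≤ c)
    (h : ∀ n : ℕ+, c ^ (n : ℕ) ≤ opNormW (f^[n]) W) : c ≤ coneSpecRad f W :=
  le_ciInf fun n => (Real.le_rpow_natCast_inv_iff hc (opNormW_nonneg _ _) n.ne_zero).2 (h n)

lemma subBeta_nonneg (A : Set (X → X)) (W : Set X) (m : ℕ) : 0 ≤ subBeta A W m :=
  Real.sInf_nonneg (by rintro _ ⟨f, -, rfl⟩; exact opNormW_nonneg _ _)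

lemma subGamma_nonneg (A : Set (X → X)) (W : Set X) (m : ℕ) : 0 ≤ subGamma A W m :=
  Real.sInf_nonneg (by rintro _ ⟨f, -, rfl⟩; exact coneSpecRad_nonneg _ _)

lemma subBeta_le_opNormW {A : Set (X → X)} {W : Set X} {m : ℕ} {f : X → X}
    (hf : f ∈ famPow A m) :
    subBeta A W m ≤ opNormW f W :=
  csInf_le ⟨0, by rintro _ ⟨g, -, rfl⟩; exact opNormW_nonneg _ _⟩ ⟨f, hf, rfl⟩

lemma subGamma_le_coneSpecRad {A : Set (X → X)} {W : Set X} {m : ℕ} {f : X → X}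
    (hf : f ∈ famPow A m) :
    subGamma A W m ≤ coneSpecRad f W :=
  csInf_le ⟨0, by rintro _ ⟨g, -, rfl⟩; exact coneSpecRad_nonneg _ _⟩ ⟨f, hf, rfl⟩

lemma subGamma_le_subBeta {A : Set (X → X)} {W : Set X} (hA : A.Nonempty) (m : ℕ) :
    subGamma A W m ≤ subBeta A W m := by
  refine le_csInf ((famPow_nonempty hA m).image _) ?_
  rintro _ ⟨f, hf, rfl⟩
  exact (subGamma_le_coneSpecRad hf).trans (coneSpecRad_le_opNormW f W)

lemma iInf_subBeta_rpow_inv_pow_le_subGamma {A : Set (X → X)} {W : Set X} (hA : A.Nonempty)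
    (m : ℕ+) :
    (⨅ k : ℕ+, subBeta A W k ^ (((k : ℕ) : ℝ)⁻¹)) ^ (m : ℕ) ≤ subGamma A W m := by
  set R := ⨅ k : ℕ+, subBeta A W k ^ (((k : ℕ) : ℝ)⁻¹)
  refine le_csInf ((famPow_nonempty hA m).image _) ?_
  rintro _ ⟨f, hf, rfl⟩
  refine le_coneSpecRad (pow_nonneg (iInf_rpow_inv_nonneg (subBeta_nonneg A W)) _) fun n => ?_
  calc (R ^ (m : ℕ)) ^ (n : ℕ) = R ^ ((m * n : ℕ+) : ℕ) := by rw [← pow_mul, PNat.mul_coe]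
    _ ≤ subBeta A W (m * n : ℕ+) := iInf_rpow_inv_pow_le (subBeta_nonneg A W) (m * n)
    _ ≤ opNormW (f^[n]) W := subBeta_le_opNormW (iterate_mem_famPow hf n)

end Subradius

theorem statement16_general {X : Type*} [NormedAddCommGroup X]
    (W : Set X) (A : Set (X → X)) (hAne : A.Nonempty) :
    (⨅ m : ℕ+, (subGamma A W (m : ℕ)) ^ (((m : ℕ) : ℝ)⁻¹)) =
      ⨅ m : ℕ+, (subBeta A W (m : ℕ)) ^ (((m : ℕ) : ℝ)⁻¹) := by
  refine le_antisymm ?_ ?_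
  · exact ciInf_mono (bddBelow_range_rpow_inv (subGamma_nonneg A W)) fun m =>
      Real.rpow_le_rpow (subGamma_nonneg A W m) (subGamma_le_subBeta hAne m) (by positivity)
  · exact le_ciInf fun m =>
      (Real.le_rpow_natCast_inv_iff (iInf_rpow_inv_nonneg (subBeta_nonneg A W))
        (subGamma_nonneg A W m) m.ne_zero).2 (iInf_subBeta_rpow_inv_pow_le_subGamma hAne m)

theorem statement16 {X : Type*} [NormedAddCommGroup X] [NormedSpace ℝ X]
    (W : Set X) (hW : IsWedge W) (hW0 : ∃ x ∈ W, x ≠ 0)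
    (A : Set (X → X)) (hAne : A.Nonempty)
    (hA : ∀ f ∈ A, HomogOn f W ∧ BoundedMapOn f W) :
    (⨅ m : ℕ+, (subGamma A W (m : ℕ)) ^ (((m : ℕ) : ℝ)⁻¹)) =
      ⨅ m : ℕ+, (subBeta A W (m : ℕ)) ^ (((m : ℕ) : ℝ)⁻¹) :=
  statement16_general W A hAne
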